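/- Let Q₁ ∈ Pos(Y₁⊗X₁), Q₂ ∈ Pos(Y₂⊗X₂) both be diagonal in the standard basis (the classical case). Define m_i = min{⟨Q_i, X⟩ : X ∈ Pos(Y_i⊗X_i), Tr_{Y_i}(X) = 1_{X_i}} and m = min{⟨Q₁⊗Q₂, X⟩ : X Choi operator of a channel from X₁⊗X₂ to Y₁⊗Y₂ (after reordering factors)}. Then m = m₁·m₂. -/

import Mathlib

/-!
For a diagonal `Q ≥ 0` the pairing `⟨Q, X⟩` only sees the diagonal of `X`, and `Tr_Y X = 1` makes
that diagonal a probability distribution over outputs `a` for every input `i`. Hence the optimum is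
`∑ᵢ cᵢ` with `cᵢ = minₐ Q(a,i)`: it is attained by the deterministic channel sending `i` to a
minimising `a`, and `c` is a dual feasible point. Tensoring optimal channels gives
`m ≤ m₁ m₂`; conversely `c₁ ⊗ c₂` is dual feasible for `Q₁ ⊗ Q₂` because all the entries involved
are nonnegative, so weak duality gives `m₁ m₂ ≤ m`.
-/

open Matrix
open scoped Kronecker ComplexOrder

noncomputable section

/-- `Φ ⊗ id` : apply a linear map `Φ` on `L(X)` to the first tensor factor of `L(X ⊗ Z)`. -/
def lmapTensorId {n m k : Type*} [Fintype n] [Fintype k]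
    (Φ : Matrix n n ℂ →ₗ[ℂ] Matrix m m ℂ)
    (M : Matrix (n × k) (n × k) ℂ) : Matrix (m × k) (m × k) ℂ :=
  fun p q => Φ (fun i j => M (i, p.2) (j, q.2)) p.1 q.1

/-- `id ⊗ Ψ` : apply a linear map `Ψ` on `L(Z)` to the second tensor factor of `L(Y ⊗ Z)`. -/
def idTensorLmap {n k l : Type*} [Fintype n] [Fintype k]
    (Ψ : Matrix k k ℂ →ₗ[ℂ] Matrix l l ℂ)
    (M : Matrix (n × k) (n × k) ℂ) : Matrix (n × l) (n × l) ℂ :=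
  fun p q => Ψ (fun a b => M (p.1, a) (q.1, b)) p.2 q.2

/-- Complete positivity: `Φ ⊗ id_k` maps positive semidefinite operators to positive
semidefinite operators for every finite-dimensional ancilla `k`. -/
def IsCompletelyPositive {n m : Type*} [Fintype n] [Fintype m]
    (Φ : Matrix n n ℂ →ₗ[ℂ] Matrix m m ℂ) : Prop :=
  ∀ (k : Type) [Fintype k] [DecidableEq k],
    ∀ M : Matrix (n × k) (n × k) ℂ, M.PosSemidef → (lmapTensorId Φ M).PosSemidef

def IsTracePreserving {n m : Type*} [Fintype n] [Fintype m]
    (Φ : Matrix n n ℂ →ₗ[ℂ] Matrix m m ℂ) : Prop :=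
  ∀ M : Matrix n n ℂ, (Φ M).trace = M.trace

/-- Partial trace over the first tensor factor. -/
def trFst {n k : Type*} [Fintype n] (M : Matrix (n × k) (n × k) ℂ) : Matrix k k ℂ :=
  fun a b => ∑ i : n, M (i, a) (i, b)

/-- Partial trace over the second tensor factor. -/
def trSnd {n k : Type*} [Fintype k] (M : Matrix (n × k) (n × k) ℂ) : Matrix n n ℂ :=
  fun i j => ∑ a : k, M (i, a) (j, a)

/-- Hilbert-Schmidt inner product `⟨A, B⟩ = Tr(A* B)`. -/
def minner {n : Type*} [Fintype n] (A B : Matrix n n ℂ) : ℂ := (Aᴴ * B).trace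

/-- The square root of a positive semidefinite matrix, as `Matrix.PosSemidef.sqrt` was defined
in Mathlib of December 2024 (removed since). -/
def Matrix.PosSemidef.sqrt {n 𝕜 : Type*} [Fintype n] [DecidableEq n] [RCLike 𝕜]
    {A : Matrix n n 𝕜} (hA : A.PosSemidef) : Matrix n n 𝕜 :=
  hA.1.eigenvectorUnitary.1 * diagonal ((↑) ∘ (√·) ∘ hA.1.eigenvalues) *
    (star hA.1.eigenvectorUnitary : Matrix n n 𝕜)

open Classical in
/-- Square root of a positive semidefinite matrix (junk value `0` otherwise). -/
def msqrt {n : Type*} [Fintype n] [DecidableEq n] (M : Matrix n n ℂ) : Matrix n n ℂ :=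
  if h : M.PosSemidef then h.sqrt else 0

/-- Trace norm `‖M‖₁ = Tr √(M* M)`. -/
def traceNorm {n : Type*} [Fintype n] [DecidableEq n] (M : Matrix n n ℂ) : ℝ :=
  ((Matrix.posSemidef_conjTranspose_mul_self M).sqrt.trace).re

/-- Fidelity `F(Q, R) = ‖√Q √R‖₁` of positive semidefinite matrices. -/
def fid {n : Type*} [Fintype n] [DecidableEq n] (Q R : Matrix n n ℂ) : ℝ :=
  traceNorm (msqrt Q * msqrt R)

/-- Choi-Jamiolkowski operator `J(Φ) = Σ_{i,j} Φ(|i⟩⟨j|) ⊗ |i⟩⟨j|`. -/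
def choi {n m : Type*} [Fintype n] [DecidableEq n] [Fintype m]
    (Φ : Matrix n n ℂ →ₗ[ℂ] Matrix m m ℂ) : Matrix (m × n) (m × n) ℂ :=
  fun p q => Φ (Matrix.single p.2 q.2 1) p.1 q.1

/-- Tensor product of vectors. -/
def tensorVec {α β : Type*} (v : α → ℂ) (w : β → ℂ) : α × β → ℂ := fun p => v p.1 * w p.2

/-- `u = (|00⟩ + |11⟩)/√2`. -/
def uVec : Fin 2 × Fin 2 → ℂ := fun p =>
  if p = (0, 0) then (Real.sqrt 2 : ℂ)⁻¹ else if p = (1, 1) then (Real.sqrt 2 : ℂ)⁻¹ else 0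

/-- `v = cos(π/8)|00⟩ + sin(π/8)|11⟩`. -/
def vVec : Fin 2 × Fin 2 → ℂ := fun p =>
  if p = (0, 0) then (Real.cos (Real.pi / 8) : ℂ)
  else if p = (1, 1) then (Real.sin (Real.pi / 8) : ℂ) else 0

/-- `w = -sin(π/8)|00⟩ + cos(π/8)|11⟩`. -/
def wVec : Fin 2 × Fin 2 → ℂ := fun p =>
  if p = (0, 0) then -(Real.sin (Real.pi / 8) : ℂ)
  else if p = (1, 1) then (Real.cos (Real.pi / 8) : ℂ) else 0

namespace Matrix.PosSemidef

lemma ofReal_re_apply_self {n : Type*} [Fintype n] {X : Matrix n n ℂ} (hX : X.PosSemidef)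
    (p : n) : ((X p p).re : ℂ) = X p p :=
  Complex.ext rfl (Complex.nonneg_iff.1 hX.diag_nonneg).2

lemma re_apply_self_nonneg {n : Type*} [Fintype n] {X : Matrix n n ℂ} (hX : X.PosSemidef)
    (p : n) : 0 ≤ (X p p).re :=
  (Complex.nonneg_iff.1 hX.diag_nonneg).1

end Matrix.PosSemidef

section Pairing

variable {n : Type*} [Fintype n]

lemma minner_kronecker {m : Type*} [Fintype m] (A C : Matrix n n ℂ) (B D : Matrix m m ℂ) :
    minner (A ⊗ₖ B) (C ⊗ₖ D) = minner A C * minner B D := by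
  rw [minner, conjTranspose_kronecker, ← mul_kronecker_mul, trace_kronecker, minner, minner]

lemma minner_submatrix_equiv {m : Type*} [Fintype m] (A B : Matrix n n ℂ) (e : m ≃ n) :
    minner (A.submatrix e e) (B.submatrix e e) = minner A B := by
  rw [minner, conjTranspose_submatrix, submatrix_mul_equiv, minner, trace, trace]
  exact e.sum_comp fun p => (Aᴴ * B) p p

lemma minner_of_isDiag {Q : Matrix n n ℂ} (hQ : Q.IsDiag) (X : Matrix n n ℂ) :
    minner Q X = ∑ p, star (Q p p) * X p p := by
  refine Finset.sum_congr rfl fun p _ => ?_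
  rw [diag_apply, mul_apply, Finset.sum_eq_single p (fun r _ hr => by simp [hQ hr]) (by simp)]
  rfl

lemma minner_diagonal [DecidableEq n] (Q : Matrix n n ℂ) (d : n → ℂ) :
    minner Q (diagonal d) = ∑ p, star (Q p p) * d p := by
  refine Finset.sum_congr rfl fun p _ => ?_
  rw [diag_apply, mul_diagonal]
  rfl

lemma minner_eq_sum_re_diag {Q X : Matrix n n ℂ} (hQ : Q.PosSemidef) (hd : Q.IsDiag)
    (hX : X.PosSemidef) : minner Q X = ((∑ p, (Q p p).re * (X p p).re : ℝ) : ℂ) := by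
  rw [minner_of_isDiag hd]
  push_cast
  refine Finset.sum_congr rfl fun p _ => ?_
  rw [← hQ.ofReal_re_apply_self p, ← hX.ofReal_re_apply_self p, Complex.star_def,
    Complex.conj_ofReal, Complex.ofReal_re, Complex.ofReal_re]

end Pairing

section ClassicalChannel

variable {y x : Type*} [DecidableEq x]

def deterministicChoi [DecidableEq y] (f : x → y) : Matrix (y × x) (y × x) ℂ :=
  diagonal fun p => if p.1 = f p.2 then 1 else 0

lemma posSemidef_deterministicChoi [DecidableEq y] (f : x → y) :
    (deterministicChoi f).PosSemidef :=
  PosSemidef.diagonal fun p => by dsimp only; split_ifs <;> simp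

variable [Fintype y]

lemma trFst_deterministicChoi [DecidableEq y] (f : x → y) : trFst (deterministicChoi f) = 1 := by
  ext i j
  simp only [trFst, deterministicChoi, diagonal_apply, Prod.ext_iff, one_apply]
  by_cases hij : i = j
  · subst hij
    simp
  · simp [hij]

lemma sum_re_diag_eq_one_of_trFst_eq_one {X : Matrix (y × x) (y × x) ℂ}
    (htr : trFst X = 1) (i : x) : ∑ a, (X (a, i) (a, i)).re = 1 := by
  rw [← Complex.re_sum]
  simpa [trFst] using congrArg Complex.re (congrFun (congrFun htr i) i)

lemma nonempty_of_trFst_eq_one {X : Matrix (y × x) (y × x) ℂ}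
    (htr : trFst X = 1) (i : x) : Nonempty y := by
  obtain ⟨a, -, -⟩ := Finset.exists_ne_zero_of_sum_ne_zero
    ((sum_re_diag_eq_one_of_trFst_eq_one htr i).trans_ne one_ne_zero)
  exact ⟨a⟩

variable [Fintype x]

def channelOutcomeValues (Q : Matrix (y × x) (y × x) ℂ) : Set ℝ :=
  {r | ∃ X : Matrix (y × x) (y × x) ℂ, X.PosSemidef ∧ trFst X = 1 ∧ r = (minner Q X).re}

lemma re_minner_deterministicChoi [DecidableEq y] (Q : Matrix (y × x) (y × x) ℂ) (f : x → y) :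
    (minner Q (deterministicChoi f)).re = ∑ i, (Q (f i, i) (f i, i)).re := by
  rw [deterministicChoi, minner_diagonal, Complex.re_sum, Fintype.sum_prod_type_right]
  refine Finset.sum_congr rfl fun i _ => ?_
  rw [Finset.sum_eq_single (f i) (fun a _ ha => by simp [ha]) (by simp)]
  simp

/-- Weak duality: `1 ⊗ diagonal c ≤ Q`, so `c` is feasible for the dual SDP `max ∑ c`. -/
lemma sum_mem_lowerBounds_channelOutcomeValues {Q : Matrix (y × x) (y × x) ℂ}
    (hQ : Q.PosSemidef) (hd : Q.IsDiag) {c : x → ℝ} (hc : ∀ a i, c i ≤ (Q (a, i) (a, i)).re) :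
    ∑ i, c i ∈ lowerBounds (channelOutcomeValues Q) := by
  rintro _ ⟨X, hX, htr, rfl⟩
  rw [minner_eq_sum_re_diag hQ hd hX, Complex.ofReal_re, Fintype.sum_prod_type_right]
  refine Finset.sum_le_sum fun i _ => ?_
  calc c i = ∑ a, c i * (X (a, i) (a, i)).re := by
        rw [← Finset.mul_sum, sum_re_diag_eq_one_of_trFst_eq_one htr, mul_one]
    _ ≤ _ := Finset.sum_le_sum fun a _ =>
        mul_le_mul_of_nonneg_right (hc a i) (hX.re_apply_self_nonneg _)

lemma exists_dual_eq_of_isLeast [DecidableEq y] {Q : Matrix (y × x) (y × x) ℂ}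
    (hQ : Q.PosSemidef) (hd : Q.IsDiag) {m : ℝ} (hm : IsLeast (channelOutcomeValues Q) m) :
    ∃ c : x → ℝ, (∀ i, 0 ≤ c i) ∧ (∀ a i, c i ≤ (Q (a, i) (a, i)).re) ∧ m = ∑ i, c i := by
  obtain ⟨X, -, htr, -⟩ := hm.1
  have hmin : ∀ i, ∃ a : y, ∀ b, (Q (a, i) (a, i)).re ≤ (Q (b, i) (b, i)).re := fun i =>
    have := nonempty_of_trFst_eq_one htr i
    Finite.exists_min fun a => (Q (a, i) (a, i)).re
  choose f hf using hmin
  refine ⟨fun i => (Q (f i, i) (f i, i)).re, fun i => hQ.re_apply_self_nonneg _, fun a i => hf i a,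
    le_antisymm (hm.2 ⟨deterministicChoi f, posSemidef_deterministicChoi f,
      trFst_deterministicChoi f, (re_minner_deterministicChoi Q f).symm⟩) ?_⟩
  exact sum_mem_lowerBounds_channelOutcomeValues hQ hd (fun a i => hf i a) hm.1

end ClassicalChannel

section Product

variable {y₁ x₁ y₂ x₂ : Type*}

def swapMiddle (M : Matrix ((y₁ × x₁) × y₂ × x₂) ((y₁ × x₁) × y₂ × x₂) ℂ) :
    Matrix ((y₁ × y₂) × x₁ × x₂) ((y₁ × y₂) × x₁ × x₂) ℂ :=
  M.submatrix (Equiv.prodProdProdComm y₁ y₂ x₁ x₂) (Equiv.prodProdProdComm y₁ y₂ x₁ x₂)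

variable [Fintype y₁] [Fintype y₂]

lemma trFst_swapMiddle (X : Matrix ((y₁ × x₁) × y₂ × x₂) ((y₁ × x₁) × y₂ × x₂) ℂ) :
    trFst (swapMiddle X) = fun p q => ∑ a, ∑ b, X ((a, p.1), (b, p.2)) ((a, q.1), (b, q.2)) := by
  ext p q
  exact Fintype.sum_prod_type _

lemma trFst_swapMiddle_kronecker (X₁ : Matrix (y₁ × x₁) (y₁ × x₁) ℂ)
    (X₂ : Matrix (y₂ × x₂) (y₂ × x₂) ℂ) :
    trFst (swapMiddle (X₁ ⊗ₖ X₂)) = trFst X₁ ⊗ₖ trFst X₂ := by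
  ext p q
  rw [trFst_swapMiddle, kroneckerMap_apply, trFst, trFst, Finset.sum_mul_sum]
  rfl

variable [Fintype x₁] [Fintype x₂]

lemma minner_swapMiddle (A B : Matrix ((y₁ × x₁) × y₂ × x₂) ((y₁ × x₁) × y₂ × x₂) ℂ) :
    minner (swapMiddle A) (swapMiddle B) = minner A B :=
  minner_submatrix_equiv A B _

lemma re_minner_kronecker_of_isDiag {Q₁ X₁ : Matrix (y₁ × x₁) (y₁ × x₁) ℂ}
    {Q₂ X₂ : Matrix (y₂ × x₂) (y₂ × x₂) ℂ} (hQ₁ : Q₁.PosSemidef) (hd₁ : Q₁.IsDiag)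
    (hX₁ : X₁.PosSemidef) (hQ₂ : Q₂.PosSemidef) (hd₂ : Q₂.IsDiag) (hX₂ : X₂.PosSemidef) :
    (minner (Q₁ ⊗ₖ Q₂) (X₁ ⊗ₖ X₂)).re = (minner Q₁ X₁).re * (minner Q₂ X₂).re := by
  rw [minner_kronecker, minner_eq_sum_re_diag hQ₁ hd₁ hX₁, minner_eq_sum_re_diag hQ₂ hd₂ hX₂,
    ← Complex.ofReal_mul, Complex.ofReal_re, Complex.ofReal_re, Complex.ofReal_re]

lemma re_swapMiddle_kronecker_apply_self {Q₁ : Matrix (y₁ × x₁) (y₁ × x₁) ℂ}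
    {Q₂ : Matrix (y₂ × x₂) (y₂ × x₂) ℂ} (hQ₁ : Q₁.PosSemidef) (hQ₂ : Q₂.PosSemidef)
    (a : y₁ × y₂) (i : x₁ × x₂) :
    (swapMiddle (Q₁ ⊗ₖ Q₂) (a, i) (a, i)).re =
      (Q₁ (a.1, i.1) (a.1, i.1)).re * (Q₂ (a.2, i.2) (a.2, i.2)).re := by
  change (Q₁ (a.1, i.1) (a.1, i.1) * Q₂ (a.2, i.2) (a.2, i.2)).re = _
  rw [← hQ₁.ofReal_re_apply_self, ← hQ₂.ofReal_re_apply_self, ← Complex.ofReal_mul,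
    Complex.ofReal_re, Complex.ofReal_re, Complex.ofReal_re]

end Product

/-- In the classical (diagonal) case the minimum-outcome SDP is multiplicative:
`m = m₁ · m₂`. -/
theorem stmt17 {y₁ x₁ y₂ x₂ : Type*}
    [Fintype y₁] [DecidableEq y₁] [Fintype x₁] [DecidableEq x₁]
    [Fintype y₂] [DecidableEq y₂] [Fintype x₂] [DecidableEq x₂]
    (Q₁ : Matrix (y₁ × x₁) (y₁ × x₁) ℂ) (hQ₁ : Q₁.PosSemidef) (hQ₁diag : Q₁.IsDiag)
    (Q₂ : Matrix (y₂ × x₂) (y₂ × x₂) ℂ) (hQ₂ : Q₂.PosSemidef) (hQ₂diag : Q₂.IsDiag)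
    (m₁ m₂ m : ℝ)
    (h₁ : IsLeast {r : ℝ | ∃ X : Matrix (y₁ × x₁) (y₁ × x₁) ℂ,
      X.PosSemidef ∧ trFst X = 1 ∧ r = (minner Q₁ X).re} m₁)
    (h₂ : IsLeast {r : ℝ | ∃ X : Matrix (y₂ × x₂) (y₂ × x₂) ℂ,
      X.PosSemidef ∧ trFst X = 1 ∧ r = (minner Q₂ X).re} m₂)
    (h : IsLeast {r : ℝ | ∃ X : Matrix ((y₁ × x₁) × y₂ × x₂) ((y₁ × x₁) × y₂ × x₂) ℂ,
      X.PosSemidef ∧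
      (fun (p q : x₁ × x₂) => ∑ a : y₁, ∑ b : y₂,
        X ((a, p.1), (b, p.2)) ((a, q.1), (b, q.2))) = (1 : Matrix (x₁ × x₂) (x₁ × x₂) ℂ) ∧
      r = (minner (Q₁ ⊗ₖ Q₂) X).re} m) :
    m = m₁ * m₂ := by
  obtain ⟨X₁, hX₁, htr₁, rfl⟩ := h₁.1
  obtain ⟨X₂, hX₂, htr₂, rfl⟩ := h₂.1
  refine le_antisymm (h.2 ⟨X₁ ⊗ₖ X₂, hX₁.kronecker hX₂, ?_, ?_⟩) ?_
  · rw [← trFst_swapMiddle, trFst_swapMiddle_kronecker, htr₁, htr₂, one_kronecker_one]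
  · exact (re_minner_kronecker_of_isDiag hQ₁ hQ₁diag hX₁ hQ₂ hQ₂diag hX₂).symm
  obtain ⟨c₁, -, hc₁Q, hm₁⟩ := exists_dual_eq_of_isLeast hQ₁ hQ₁diag h₁
  obtain ⟨c₂, hc₂, hc₂Q, hm₂⟩ := exists_dual_eq_of_isLeast hQ₂ hQ₂diag h₂
  obtain ⟨X, hX, htr, rfl⟩ := h.1
  have hdual : ∀ (a : y₁ × y₂) (i : x₁ × x₂),
      c₁ i.1 * c₂ i.2 ≤ (swapMiddle (Q₁ ⊗ₖ Q₂) (a, i) (a, i)).re := fun a i => by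
    rw [re_swapMiddle_kronecker_apply_self hQ₁ hQ₂]
    exact mul_le_mul (hc₁Q _ _) (hc₂Q _ _) (hc₂ _) (hQ₁.re_apply_self_nonneg _)
  rw [hm₁, hm₂, Fintype.sum_mul_sum, ← Fintype.sum_prod_type', ← minner_swapMiddle]
  exact sum_mem_lowerBounds_channelOutcomeValues
    ((hQ₁.kronecker hQ₂).submatrix _) ((hQ₁diag.kronecker hQ₂diag).submatrix (Equiv.injective _))
    hdual ⟨swapMiddle X, hX.submatrix _, (trFst_swapMiddle X).trans htr, rfl⟩

end
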